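/- Let q > 3 and α ∈ (0, α*(q)), and define g₂(t) = 2 t f'(t) + (q-1) f(t), where f(t) = t² - 1 - α t^q. Then g₂(x₀(α)) > 0, g₂(x₁(α)) < 0, and g₂ changes sign exactly once on [x₀(α), x₁(α)]: there exists a unique c ∈ (x₀(α), x₁(α)) with g₂ > 0 on [x₀(α), c) and g₂ < 0 on (c, x₁(α)]. -/

import Mathlib

open Set Filter MeasureTheory

noncomputable def fQ (q α t : ℝ) : ℝ := t ^ 2 - 1 - α * t ^ q

noncomputable def alphaStar (q : ℝ) : ℝ := 2 / (q - 2) * ((q - 2) / q) ^ (q / 2)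

noncomputable def x0 (q α : ℝ) : ℝ := sInf {t : ℝ | 0 < t ∧ fQ q α t = 0}

noncomputable def x1 (q α : ℝ) : ℝ := sSup {t : ℝ | 0 < t ∧ fQ q α t = 0}

noncomputable def Iq (q α : ℝ) : ℝ := ∫ t in x0 q α..x1 q α, 1 / Real.sqrt (fQ q α t)

noncomputable def fQd1 (q α t : ℝ) : ℝ := 2 * t - α * q * t ^ (q - 1)

noncomputable def fQd2 (q α t : ℝ) : ℝ := 2 - α * q * (q - 1) * t ^ (q - 2)

noncomputable def fQd3 (q α t : ℝ) : ℝ := -(α * q * (q - 1) * (q - 2) * t ^ (q - 3))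

noncomputable def psiQ (q α t : ℝ) : ℝ := fQd1 q α t ^ 2 - 2 * fQ q α t * fQd2 q α t

/-!
Writing f(t) = t^q (L(t) - α) with L(t) = (t² - 1) t^(-q), the positive roots of f are the
solutions of L = α. Since L increases on [1, t*] and decreases on [t*, ∞), where
t* = √(q/(q-2)) and L(t*) = α*(q), these are x₀ < t* < x₁. At a root, α t^q = t² - 1 turns g₂
into 2((2 - q) t² + q), which is positive below t* and negative above it. Finally
g₂(t) = t^q (G(t) - (3q - 1) α) with G(t) = ((q + 3) t² - (q - 1)) t^(-q), and
G'(t) = t^(-q-1) ((2 - q)(q + 3) t² + q(q - 1)) < 0 for t > 1 as soon as q ≥ 3, so once g₂ is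
nonpositive on [x₀, x₁] it stays negative: the sign change is unique.
-/

open Real

lemma sub_sub_mul_rpow_eq {A B C t : ℝ} (q : ℝ) (ht : 0 < t) :
    A * t ^ 2 - B - C * t ^ q = t ^ q * ((A * t ^ 2 - B) * t ^ (-q) - C) := by
  have h : t ^ q * t ^ (-q) = 1 := by rw [← rpow_add ht, add_neg_cancel, rpow_zero]
  linear_combination -(A * t ^ 2 - B) * h

lemma hasDerivAt_quadratic_mul_rpow_neg (A B q : ℝ) {t : ℝ} (ht : 0 < t) :
    HasDerivAt (fun s => (A * s ^ 2 - B) * s ^ (-q))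
      (t ^ (-q - 1) * ((2 - q) * A * t ^ 2 + q * B)) t := by
  have hquad : HasDerivAt (fun s : ℝ => A * s ^ 2 - B) (A * (2 * t)) t := by
    simpa using ((hasDerivAt_pow 2 t).const_mul A).sub_const B
  have hrpow : HasDerivAt (fun s : ℝ => s ^ (-q)) (-q * t ^ (-q - 1)) t := by
    simpa using hasDerivAt_rpow_const (x := t) (p := -q) (Or.inl ht.ne')
  refine (hquad.mul hrpow).congr_deriv ?_
  have h : t ^ (-q) = t ^ (-q - 1) * t := by rw [← rpow_add_one ht.ne']; ring_nf
  rw [h]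
  ring

noncomputable def rootLevel (q t : ℝ) : ℝ := (t ^ 2 - 1) * t ^ (-q)

noncomputable def tStar (q : ℝ) : ℝ := √(q / (q - 2))

lemma fQ_eq_rpow_mul {q t : ℝ} (α : ℝ) (ht : 0 < t) :
    fQ q α t = t ^ q * (rootLevel q t - α) := by
  simpa [fQ, rootLevel] using sub_sub_mul_rpow_eq (A := 1) (B := 1) (C := α) q ht

lemma fQ_eq_zero_iff {q α t : ℝ} (ht : 0 < t) : fQ q α t = 0 ↔ rootLevel q t = α := by
  rw [fQ_eq_rpow_mul α ht, mul_eq_zero, sub_eq_zero, or_iff_right (rpow_pos_of_pos ht q).ne']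

lemma hasDerivAt_rootLevel (q : ℝ) {t : ℝ} (ht : 0 < t) :
    HasDerivAt (rootLevel q) (t ^ (-q - 1) * ((2 - q) * t ^ 2 + q)) t := by
  have h := hasDerivAt_quadratic_mul_rpow_neg 1 1 q ht
  simp only [one_mul, mul_one] at h
  exact h

lemma continuousOn_rootLevel (q : ℝ) {s : Set ℝ} (hs : s ⊆ Ioi 0) :
    ContinuousOn (rootLevel q) s :=
  fun _t ht => (hasDerivAt_rootLevel q (hs ht)).continuousAt.continuousWithinAt

lemma one_lt_of_rootLevel_pos {q t : ℝ} (ht : 0 < t) (h : 0 < rootLevel q t) : 1 < t := by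
  by_contra! ht1
  exact h.not_ge (mul_nonpos_of_nonpos_of_nonneg (by nlinarith) (rpow_nonneg ht.le _))

lemma lt_tStar_iff {q t : ℝ} (hq : 2 < q) (ht : 0 ≤ t) :
    t < tStar q ↔ 0 < (2 - q) * t ^ 2 + q := by
  rw [tStar, lt_sqrt ht, lt_div_iff₀ (by linarith)]
  constructor <;> intro h <;> linarith

lemma tStar_lt_iff {q t : ℝ} (hq : 2 < q) (ht : 0 < t) :
    tStar q < t ↔ (2 - q) * t ^ 2 + q < 0 := by
  rw [tStar, sqrt_lt' ht, div_lt_iff₀ (by linarith)]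
  constructor <;> intro h <;> linarith

lemma one_lt_tStar {q : ℝ} (hq : 2 < q) : 1 < tStar q :=
  (lt_tStar_iff hq zero_le_one).2 (by linarith)

lemma rootLevel_tStar {q : ℝ} (hq : 2 < q) : rootLevel q (tStar q) = alphaStar q := by
  have hr : 0 < q / (q - 2) := div_pos (by linarith) (by linarith)
  have h1 : q / (q - 2) - 1 = 2 / (q - 2) := by
    field_simp [(by linarith : q - 2 ≠ 0)]
    ring
  rw [rootLevel, alphaStar, tStar, sq_sqrt hr.le, h1, sqrt_eq_rpow, ← rpow_mul hr.le,
    ← inv_div q, inv_rpow hr.le, ← rpow_neg hr.le]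
  ring_nf

lemma strictMonoOn_rootLevel {q : ℝ} (hq : 2 < q) :
    StrictMonoOn (rootLevel q) (Icc 1 (tStar q)) := by
  refine strictMonoOn_of_deriv_pos (convex_Icc _ _)
    (continuousOn_rootLevel q fun t ht => mem_Ioi.2 (by linarith [ht.1])) fun t ht => ?_
  rw [interior_Icc] at ht
  have ht0 : 0 < t := by linarith [ht.1]
  rw [(hasDerivAt_rootLevel q ht0).deriv]
  exact mul_pos (rpow_pos_of_pos ht0 _) ((lt_tStar_iff hq ht0.le).1 ht.2)

lemma strictAntiOn_rootLevel {q : ℝ} (hq : 2 < q) :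
    StrictAntiOn (rootLevel q) (Ici (tStar q)) := by
  have h1 := one_lt_tStar hq
  refine strictAntiOn_of_deriv_neg (convex_Ici _)
    (continuousOn_rootLevel q fun t ht => mem_Ioi.2 (by linarith [ht.out])) fun t ht => ?_
  rw [interior_Ici] at ht
  have ht0 : 0 < t := by linarith [ht.out]
  rw [(hasDerivAt_rootLevel q ht0).deriv]
  exact mul_neg_of_pos_of_neg (rpow_pos_of_pos ht0 _) ((tStar_lt_iff hq ht0).1 ht)

lemma tendsto_rootLevel_atTop {q : ℝ} (hq : 2 < q) :
    Tendsto (rootLevel q) atTop (nhds 0) := by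
  have h2 : Tendsto (fun t : ℝ => t ^ (2 - q)) atTop (nhds 0) := by
    simpa using tendsto_rpow_neg_atTop (y := q - 2) (by linarith)
  have h := h2.sub (tendsto_rpow_neg_atTop (y := q) (by linarith))
  rw [sub_zero] at h
  refine h.congr' ?_
  filter_upwards [eventually_gt_atTop 0] with t ht
  rw [rootLevel, sub_mul, ← rpow_natCast, ← rpow_add ht]
  norm_num [sub_eq_add_neg]

lemma exists_pos_roots_eq_pair {q α : ℝ} (hq : 2 < q) (hα : α ∈ Ioo 0 (alphaStar q)) :
    ∃ a b, 1 < a ∧ a < tStar q ∧ tStar q < b ∧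
      {t : ℝ | 0 < t ∧ fQ q α t = 0} = {a, b} := by
  have h1 := one_lt_tStar hq
  have hαmax : α ∈ Ioo 0 (rootLevel q (tStar q)) := rootLevel_tStar hq ▸ hα
  obtain ⟨a, ⟨ha1, hat⟩, ha⟩ := intermediate_value_Ioo h1.le
    (continuousOn_rootLevel q fun t ht => mem_Ioi.2 (by linarith [ht.1]))
    (by simpa [rootLevel] using hαmax)
  obtain ⟨T, hTα, hTt⟩ := ((tendsto_rootLevel_atTop hq).eventually_lt_const hα.1 |>.and
    (eventually_gt_atTop (tStar q))).exists
  obtain ⟨b, ⟨htb, -⟩, hb⟩ := intermediate_value_Ioo' hTt.le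
    (continuousOn_rootLevel q fun t ht => mem_Ioi.2 (by linarith [ht.1])) ⟨hTα, hαmax.2⟩
  refine ⟨a, b, ha1, hat, htb, Set.ext fun t => ⟨fun ⟨ht, hft⟩ => ?_, ?_⟩⟩
  · rw [fQ_eq_zero_iff ht] at hft
    have ht1 := one_lt_of_rootLevel_pos ht (hft ▸ hα.1)
    rcases le_total t (tStar q) with htt | htt
    · exact Or.inl <| (strictMonoOn_rootLevel hq).injOn ⟨ht1.le, htt⟩ ⟨ha1.le, hat.le⟩
        (hft.trans ha.symm)
    · exact Or.inr <| (strictAntiOn_rootLevel hq).injOn htt htb.le (hft.trans hb.symm)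
  · rintro (rfl | rfl)
    · exact ⟨by linarith, (fQ_eq_zero_iff (by linarith)).2 ha⟩
    · exact ⟨by linarith, (fQ_eq_zero_iff (by linarith)).2 hb⟩

lemma x0_x1_spec {q α : ℝ} (hq : 2 < q) (hα : α ∈ Ioo 0 (alphaStar q)) :
    1 < x0 q α ∧ x0 q α < tStar q ∧ tStar q < x1 q α ∧
      fQ q α (x0 q α) = 0 ∧ fQ q α (x1 q α) = 0 := by
  obtain ⟨a, b, ha1, hat, htb, hroots⟩ := exists_pos_roots_eq_pair hq hα
  have hab : a ≤ b := (hat.trans htb).le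
  have hx0 : x0 q α = a := by rw [x0, hroots, csInf_pair, inf_eq_left.2 hab]
  have hx1 : x1 q α = b := by rw [x1, hroots, csSup_pair, sup_eq_right.2 hab]
  have hmem : a ∈ {t : ℝ | 0 < t ∧ fQ q α t = 0} ∧ b ∈ {t : ℝ | 0 < t ∧ fQ q α t = 0} := by
    simp [hroots]
  exact ⟨hx0 ▸ ha1, hx0 ▸ hat, hx1 ▸ htb, hx0 ▸ hmem.1.2, hx1 ▸ hmem.2.2⟩

lemma existsUnique_sign_change {g : ℝ → ℝ} {a b : ℝ} (hab : a ≤ b)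
    (hg : ContinuousOn g (Icc a b)) (ha : 0 < g a) (hb : g b < 0)
    (hstay : ∀ s ∈ Icc a b, ∀ t ∈ Icc a b, s < t → g s ≤ 0 → g t < 0) :
    ∃! c, c ∈ Ioo a b ∧ (∀ t ∈ Ico a c, 0 < g t) ∧ ∀ t ∈ Ioc c b, g t < 0 := by
  obtain ⟨c, hc, hgc⟩ := intermediate_value_Ioo' hab hg ⟨hb, ha⟩
  have hcI : c ∈ Icc a b := Ioo_subset_Icc_self hc
  refine ⟨c, ⟨hc, fun t ht => ?_, fun t ht => ?_⟩, ?_⟩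
  · by_contra! hgt
    exact (hstay t ⟨ht.1, ht.2.le.trans hcI.2⟩ c hcI ht.2 hgt).ne hgc
  · exact hstay c hcI t ⟨hcI.1.trans ht.1.le, ht.2⟩ ht.1 hgc.le
  · rintro c' ⟨-, hpos, hneg⟩
    by_contra! hne
    rcases hne.lt_or_gt with h | h
    · exact (hneg c ⟨h, hcI.2⟩).ne hgc
    · exact (hpos c ⟨hcI.1, h⟩).ne' hgc

noncomputable def g2Q (q α t : ℝ) : ℝ := 2 * t * fQd1 q α t + (q - 1) * fQ q α t

noncomputable def g2Level (q t : ℝ) : ℝ := ((q + 3) * t ^ 2 - (q - 1)) * t ^ (-q)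

lemma g2Q_eq {q α t : ℝ} (ht : 0 < t) :
    g2Q q α t = (q + 3) * t ^ 2 - (q - 1) - α * (3 * q - 1) * t ^ q := by
  have h : t ^ q = t ^ (q - 1) * t := by rw [← rpow_add_one ht.ne']; ring_nf
  rw [g2Q, fQd1, fQ, h]
  ring

lemma g2Q_eq_rpow_mul {q t : ℝ} (α : ℝ) (ht : 0 < t) :
    g2Q q α t = t ^ q * (g2Level q t - α * (3 * q - 1)) := by
  rw [g2Q_eq ht, g2Level]
  exact sub_sub_mul_rpow_eq q ht

lemma g2Q_eq_of_fQ_eq_zero {q α t : ℝ} (ht : 0 < t) (h : fQ q α t = 0) :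
    g2Q q α t = 2 * ((2 - q) * t ^ 2 + q) := by
  rw [g2Q_eq ht]
  rw [fQ] at h
  linear_combination (3 * q - 1) * h

lemma continuousOn_g2Q (q α : ℝ) : ContinuousOn (g2Q q α) (Ioi 0) := by
  intro t ht
  have ht0 : t ≠ 0 := (mem_Ioi.1 ht).ne'
  unfold g2Q fQd1 fQ
  fun_prop (disch := exact Or.inl ht0)

lemma strictAntiOn_g2Level {q : ℝ} (hq : 3 ≤ q) : StrictAntiOn (g2Level q) (Ici 1) := by
  have hderiv {t : ℝ} (ht : 0 < t) : HasDerivAt (g2Level q)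
      (t ^ (-q - 1) * ((2 - q) * (q + 3) * t ^ 2 + q * (q - 1))) t :=
    hasDerivAt_quadratic_mul_rpow_neg (q + 3) (q - 1) q ht
  refine strictAntiOn_of_deriv_neg (convex_Ici _)
    (fun t ht => (hderiv (by linarith [ht.out])).continuousAt.continuousWithinAt)
    fun t ht => ?_
  rw [interior_Ici] at ht
  have ht1 : 1 < t := ht
  rw [(hderiv (by linarith)).deriv]
  refine mul_neg_of_pos_of_neg (rpow_pos_of_pos (by linarith) _) ?_
  nlinarith [mul_pos (by nlinarith : (0 : ℝ) < (q - 2) * (q + 3))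
    (by nlinarith : (0 : ℝ) < t ^ 2 - 1)]

lemma g2Q_neg_of_nonpos {q α s t : ℝ} (hq : 3 ≤ q) (hs : 1 ≤ s) (hst : s < t)
    (h : g2Q q α s ≤ 0) : g2Q q α t < 0 := by
  have hs0 : 0 < s := by linarith
  have ht0 : 0 < t := by linarith
  rw [g2Q_eq_rpow_mul α hs0] at h
  rw [g2Q_eq_rpow_mul α ht0]
  have hle := nonpos_of_mul_nonpos_right h (rpow_pos_of_pos hs0 q)
  have hlt := strictAntiOn_g2Level hq (mem_Ici.2 hs) (mem_Ici.2 (hs.trans hst.le)) hst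
  exact mul_neg_of_pos_of_neg (rpow_pos_of_pos ht0 q) (by linarith)

/-- for q > 3, g₂ = 2tf' + (q-1)f satisfies g₂(x₀) > 0, g₂(x₁) < 0,
and g₂ changes sign exactly once on [x₀, x₁]. -/
theorem stmt_18 (q α : ℝ) (hq : 3 < q) (hα : α ∈ Ioo (0 : ℝ) (alphaStar q)) :
    let g2 : ℝ → ℝ := fun t => 2 * t * fQd1 q α t + (q - 1) * fQ q α t
    0 < g2 (x0 q α) ∧ g2 (x1 q α) < 0 ∧
    ∃! c : ℝ, c ∈ Ioo (x0 q α) (x1 q α) ∧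
      (∀ t ∈ Ico (x0 q α) c, 0 < g2 t) ∧ (∀ t ∈ Ioc c (x1 q α), g2 t < 0) := by
  show 0 < g2Q q α (x0 q α) ∧ g2Q q α (x1 q α) < 0 ∧ ∃! c : ℝ, c ∈ Ioo (x0 q α) (x1 q α) ∧
    (∀ t ∈ Ico (x0 q α) c, 0 < g2Q q α t) ∧ (∀ t ∈ Ioc c (x1 q α), g2Q q α t < 0)
  have hq2 : 2 < q := by linarith
  obtain ⟨hx0, hx0t, htx1, hfx0, hfx1⟩ := x0_x1_spec hq2 hα
  have hx1 : 1 < x1 q α := (one_lt_tStar hq2).trans htx1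
  have hg0 : 0 < g2Q q α (x0 q α) := by
    rw [g2Q_eq_of_fQ_eq_zero (by linarith) hfx0]
    linarith [(lt_tStar_iff hq2 (by linarith)).1 hx0t]
  have hg1 : g2Q q α (x1 q α) < 0 := by
    rw [g2Q_eq_of_fQ_eq_zero (by linarith) hfx1]
    linarith [(tStar_lt_iff hq2 (by linarith)).1 htx1]
  refine ⟨hg0, hg1, existsUnique_sign_change (hx0t.trans htx1).le
    ((continuousOn_g2Q q α).mono fun t ht => mem_Ioi.2 (by linarith [ht.1])) hg0 hg1 ?_⟩
  exact fun s hs t _ hst => g2Q_neg_of_nonpos hq.le (by linarith [hs.1]) hst
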